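/- arXiv:2106.09793 — 2 statements merged into one kernel-verified Lean document; each statement's English description precedes it below -/
import Mathlib

section
/- Every semicommutative ring is NI: if for all a, b in R, ab = 0 implies aRb = 0, then the set of nilpotent elements of R forms a two-sided ideal. -/
/-- The set of nilpotent elements of `R`. -/
def nilSet (R : Type*) [Ring R] : Set R := {x | IsNilpotent x}

/-- A two-sided ideal is nil if all its elements are nilpotent. -/
def TwoSidedIdeal.IsNil {R : Type*} [Ring R] (I : TwoSidedIdeal R) : Prop :=
  ∀ x ∈ I, IsNilpotent x

/-- The upper nilradical of `R`: the sum of all nil two-sided ideals. -/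
def upperNilradical (R : Type*) [Ring R] : TwoSidedIdeal R :=
  sSup {I : TwoSidedIdeal R | I.IsNil}

/-- `R` is an NI ring if its set of nilpotent elements equals its upper nilradical. -/
def IsNIRing (R : Type*) [Ring R] : Prop :=
  (upperNilradical R : Set R) = nilSet R

/-- The Jacobson radical of the ring `R` (intersection of all maximal left ideals). -/
def jacobsonRad (R : Type*) [Ring R] : Ideal R := (⊥ : Ideal R).jacobson

section Aux

variable {R : Type*} [Ring R]

/-- The key auxiliary set attached to an element `a` of a semicommutative ring. -/
def pSet (a : R) : Set R :=
  {x : R | ∀ (c d : R) (k : ℕ), c * a ^ (k + 1) = 0 → c * x * d * a ^ k = 0}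

lemma pSet_zero (a : R) : (0 : R) ∈ pSet a := by
  intro c d k _; simp

lemma pSet_add {a : R} {x y : R} (hx : x ∈ pSet a) (hy : y ∈ pSet a) :
    x + y ∈ pSet a := by
  intro c d k hc
  simp only [mul_add, add_mul]
  rw [hx c d k hc, hy c d k hc, add_zero]

lemma pSet_neg {a : R} {x : R} (hx : x ∈ pSet a) : -x ∈ pSet a := by
  intro c d k hc
  simp only [mul_neg, neg_mul]
  rw [hx c d k hc, neg_zero]

lemma pSet_mul_left (h : ∀ a b : R, a * b = 0 → ∀ r : R, a * r * b = 0)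
    {a x y : R} (hy : y ∈ pSet a) : x * y ∈ pSet a := by
  intro c d k hc
  rw [← mul_assoc]
  exact hy (c * x) d k (h c _ hc x)

lemma pSet_mul_right {a x y : R} (hx : x ∈ pSet a) : x * y ∈ pSet a := by
  intro c d k hc
  rw [← mul_assoc, mul_assoc (c * x) y d]
  exact hx c (y * d) k hc

lemma self_mem_pSet (h : ∀ a b : R, a * b = 0 → ∀ r : R, a * r * b = 0)
    (a : R) : a ∈ pSet a := by
  intro c d k hc
  rw [pow_succ', ← mul_assoc] at hc
  exact h _ _ hc d

/-- The two-sided ideal attached to an element `a` of a semicommutative ring. -/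
def pIdeal (h : ∀ a b : R, a * b = 0 → ∀ r : R, a * r * b = 0) (a : R) :
    TwoSidedIdeal R :=
  TwoSidedIdeal.mk' (pSet a) (pSet_zero a) pSet_add pSet_neg
    (pSet_mul_left h) pSet_mul_right

lemma mem_pIdeal_iff (h : ∀ a b : R, a * b = 0 → ∀ r : R, a * r * b = 0)
    (a x : R) : x ∈ pIdeal h a ↔ x ∈ pSet a := by
  simp [pIdeal]

/-- Any element of `pSet a` is nilpotent when `a` is. -/
lemma pSet_isNilpotent {a x : R} (hx : x ∈ pSet a) (ha : IsNilpotent a) :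
    IsNilpotent x := by
  obtain ⟨n, hn⟩ := ha
  have claim : ∀ j k : ℕ, j + k = n → x ^ j * a ^ k = 0 := by
    intro j
    induction j with
    | zero => intro k hk; subst hk; simpa using hn
    | succ j ih =>
      intro k hk
      have h1 : x ^ j * a ^ (k + 1) = 0 := ih (k + 1) (by omega)
      have h2 := hx (x ^ j) 1 k h1
      rw [mul_one] at h2
      rw [pow_succ]
      exact h2
  exact ⟨n, by simpa using claim n 0 (by omega)⟩

end Aux

/-- Every semicommutative ring is NI: if `a * b = 0` implies `a * r * b = 0` for all `r`,
then the set of nilpotent elements forms a two-sided ideal. -/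
theorem semicommutative_isNI (R : Type*) [Ring R]
    (h : ∀ a b : R, a * b = 0 → ∀ r : R, a * r * b = 0) :
    ∃ I : TwoSidedIdeal R, (I : Set R) = nilSet R := by
  have hmul_left : ∀ (r b : R), IsNilpotent b → IsNilpotent (r * b) := by
    intro r b hb
    exact pSet_isNilpotent (pSet_mul_left h (self_mem_pSet h b)) hb
  have hmul_right : ∀ (b r : R), IsNilpotent b → IsNilpotent (b * r) := by
    intro b r hb
    exact pSet_isNilpotent (pSet_mul_right (self_mem_pSet h b)) hb
  have hadd : ∀ (a b : R), IsNilpotent a → IsNilpotent b → IsNilpotent (a + b) := by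
    intro a b ha hb
    obtain ⟨m, hm⟩ := hb
    set I := pIdeal h a with hI
    have haI : a ∈ I := (mem_pIdeal_iff h a a).2 (self_mem_pSet h a)
    have key : ∀ j : ℕ, (a + b) ^ j - b ^ j ∈ I := by
      intro j
      induction j with
      | zero => simpa using I.zero_mem
      | succ j ih =>
        have : (a + b) ^ (j + 1) - b ^ (j + 1)
            = (a + b) ^ j * a + ((a + b) ^ j - b ^ j) * b := by
          rw [pow_succ, pow_succ]
          noncomm_ring
        rw [this]
        exact I.add_mem (I.mul_mem_left _ _ haI) (I.mul_mem_right _ _ ih)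
    have hmem : (a + b) ^ m ∈ I := by
      have := key m
      rw [hm, sub_zero] at this
      exact this
    have : IsNilpotent ((a + b) ^ m) :=
      pSet_isNilpotent ((mem_pIdeal_iff h a _).1 hmem) ha
    obtain ⟨j, hj⟩ := this
    exact ⟨m * j, by rwa [pow_mul]⟩
  refine ⟨TwoSidedIdeal.mk' (nilSet R) ⟨1, by simp⟩
    (fun {x y} hx hy => hadd x y hx hy)
    (fun {x} hx => IsNilpotent.neg hx)
    (fun {x y} hy => hmul_left x y hy)
    (fun {x y} hx => hmul_right x y hx), ?_⟩
  exact TwoSidedIdeal.coe_mk' _ _ _ _ _ _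
end

section
/- Let R = ⊕_{n≥0} R_n be an N-graded ring that is NI and such that J(R) ∩ R_0 is a nil ideal. Then R is NJ, i.e., J(R) = N(R). -/
/-!
In an NI ring the nilpotent elements form the ideal `N = N*(R)`, so `N ⊆ J(R)` and `R / N` is
reduced. For the converse take `a ∈ J(R)` of top degree `m ≥ 1` and a left inverse `z` of
`1 - a`. Comparing components of degree `n + m` in `z = 1 + z a` gives
`a_m z_n a_m = a_m z_{n+m} - ∑_{i<m} a_m z_{n+m-i} a_i`, so by downward induction on `n` and
reducedness of `R / N` every `a_m z_n` lies in `N`. In degree zero `z_0 (1 - a_0) = 1`, whence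
`a_m = a_m z_0 (1 - a_0) ∈ N`. Removing `a_m` lowers the degree, and in degree zero the hypothesis
that `J(R) ∩ R_0` is nil applies.
-/

open DirectSum

section

variable {R : Type*} [Ring R]

theorem TwoSidedIdeal.IsNil.mem_jacobsonRad {I : TwoSidedIdeal R} (hI : I.IsNil) {x : R}
    (hx : x ∈ I) : x ∈ jacobsonRad R := by
  refine Ideal.mem_jacobson_iff.2 fun y => ?_
  obtain ⟨u, hu⟩ := (hI _ (I.mul_mem_left y x hx)).isUnit_one_add
  refine ⟨↑u⁻¹, ?_⟩
  rw [Ideal.mem_bot, mul_assoc, ← mul_add_one, add_comm, ← hu, Units.inv_mul, sub_self]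

theorem exists_mul_one_sub_eq_one_of_mem_jacobsonRad {a : R} (ha : a ∈ jacobsonRad R) :
    ∃ z, z * (1 - a) = 1 := by
  obtain ⟨z, hz⟩ := Ideal.exists_mul_add_sub_mem_of_mem_jacobson (-a) (neg_mem ha)
  exact ⟨z, by rwa [Ideal.mem_bot, sub_eq_zero, neg_add_eq_sub] at hz⟩

namespace IsNIRing

theorem mem_upperNilradical_iff (hNI : IsNIRing R) {x : R} :
    x ∈ upperNilradical R ↔ IsNilpotent x := by
  rw [← SetLike.mem_coe, hNI]
  rfl

theorem mem_jacobsonRad_of_isNilpotent (hNI : IsNIRing R) {x : R} (hx : IsNilpotent x) :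
    x ∈ jacobsonRad R :=
  TwoSidedIdeal.IsNil.mem_jacobsonRad (fun _ hy => hNI.mem_upperNilradical_iff.1 hy)
    (hNI.mem_upperNilradical_iff.2 hx)

theorem mul_mem_upperNilradical_of_mul_mul_mem (hNI : IsNIRing R) {a x : R}
    (h : a * x * a ∈ upperNilradical R) : a * x ∈ upperNilradical R := by
  have hsq : (a * x) ^ 2 ∈ upperNilradical R := by
    rw [sq, ← mul_assoc]
    exact (upperNilradical R).mul_mem_right _ x h
  exact hNI.mem_upperNilradical_iff.2 (hNI.mem_upperNilradical_iff.1 hsq).of_pow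

end IsNIRing

section Graded

variable (𝒜 : ℕ → AddSubgroup R) [GradedRing 𝒜]

theorem exists_decompose_eq_zero_of_lt (a : R) :
    ∃ m, ∀ i, m < i → (decompose 𝒜 a i : R) = 0 := by
  classical
  refine ⟨(decompose 𝒜 a).support.sup id, fun i hi => ?_⟩
  by_contra h
  have hle := Finset.le_sup (f := id)
    (DFinsupp.mem_support_iff.2 fun h' => h (by rw [h']; rfl))
  exact not_le.2 hi hle

theorem sum_range_decompose_eq {a : R} {m : ℕ}
    (ha : ∀ i, m < i → (decompose 𝒜 a i : R) = 0) :
    ∑ i ∈ Finset.range (m + 1), (decompose 𝒜 a i : R) = a := by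
  classical
  conv_rhs => rw [← sum_support_decompose 𝒜 a]
  refine (Finset.sum_subset (fun i hi => ?_) fun i _ hi => ?_).symm
  · by_contra hi'
    refine DFinsupp.mem_support_iff.1 hi (Subtype.ext ?_)
    exact ha i (by simpa using hi')
  · rw [DFinsupp.notMem_support_iff.1 hi]
    rfl

theorem mem_zero_of_decompose_eq_zero {a : R}
    (ha : ∀ i, 0 < i → (decompose 𝒜 a i : R) = 0) : a ∈ 𝒜 0 := by
  rw [← sum_range_decompose_eq 𝒜 ha, Finset.sum_range_one]
  exact SetLike.coe_mem _

theorem decompose_sub_decompose_eq_zero {a : R} {m : ℕ}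
    (ha : ∀ i, m + 1 < i → (decompose 𝒜 a i : R) = 0) :
    ∀ i, m < i → (decompose 𝒜 (a - decompose 𝒜 a (m + 1)) i : R) = 0 := by
  intro i hi
  rw [decompose_sub, DirectSum.sub_apply, AddSubgroup.coe_sub]
  rcases eq_or_ne (m + 1) i with rfl | hne
  · rw [decompose_of_mem_same 𝒜 (SetLike.coe_mem _), sub_self]
  · rw [decompose_of_mem_ne 𝒜 (SetLike.coe_mem _) hne, ha i (by omega), sub_zero]

theorem coe_decompose_mul_add_eq {b : R} {m : ℕ}
    (hb : ∀ i, m < i → (decompose 𝒜 b i : R) = 0) (a : R) (n : ℕ) :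
    (decompose 𝒜 (a * b) (n + m) : R) = decompose 𝒜 a n * decompose 𝒜 b m +
      ∑ i ∈ Finset.range m, (decompose 𝒜 a (n + m - i) : R) * decompose 𝒜 b i := by
  conv_lhs =>
    rw [← sum_range_decompose_eq 𝒜 hb, Finset.mul_sum, ← GradedRing.proj_apply, map_sum]
  rw [Finset.sum_congr rfl fun i hi => by
    rw [GradedRing.proj_apply, coe_decompose_mul_of_right_mem_of_le 𝒜 (SetLike.coe_mem _)
      (by have := Finset.mem_range.1 hi; omega)]]
  rw [Finset.sum_range_succ, add_comm, Nat.add_sub_cancel]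

end Graded

namespace IsNIRing

variable (𝒜 : ℕ → AddSubgroup R) [GradedRing 𝒜]

theorem decompose_mul_decompose_mem_upperNilradical (hNI : IsNIRing R) {a z : R} {m : ℕ}
    (hm : 0 < m) (ha : ∀ i, m < i → (decompose 𝒜 a i : R) = 0) (hz : z * (1 - a) = 1) (n : ℕ) :
    (decompose 𝒜 a m : R) * decompose 𝒜 z n ∈ upperNilradical R := by
  set N := upperNilradical R
  obtain ⟨t, ht⟩ := exists_decompose_eq_zero_of_lt 𝒜 z
  refine Nat.strong_decreasing_induction
    ⟨t, fun k hk => by rw [ht k hk, mul_zero]; exact N.zero_mem⟩ (fun n ih => ?_) n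
  refine hNI.mul_mem_upperNilradical_of_mul_mul_mem ?_
  have hz' : z = 1 + z * a := by rw [← hz]; noncomm_ring
  have hcomp : (decompose 𝒜 z (n + m) : R) = decompose 𝒜 z n * decompose 𝒜 a m +
      ∑ i ∈ Finset.range m, (decompose 𝒜 z (n + m - i) : R) * decompose 𝒜 a i := by
    conv_lhs => rw [hz', decompose_add, DirectSum.add_apply, AddSubgroup.coe_add,
      decompose_of_mem_ne 𝒜 (SetLike.one_mem_graded 𝒜) (by omega), zero_add]
    exact coe_decompose_mul_add_eq 𝒜 ha z n
  have hsplit : (decompose 𝒜 a m : R) * decompose 𝒜 z n * decompose 𝒜 a m =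
      decompose 𝒜 a m * decompose 𝒜 z (n + m) - ∑ i ∈ Finset.range m,
        (decompose 𝒜 a m : R) * decompose 𝒜 z (n + m - i) * decompose 𝒜 a i := by
    rw [hcomp, mul_add, Finset.mul_sum]
    simp only [mul_assoc, add_sub_cancel_right]
  rw [hsplit]
  refine N.sub_mem (ih _ (by omega)) (sum_mem fun i hi => N.mul_mem_right _ _ (ih _ ?_))
  have := Finset.mem_range.1 hi
  omega

theorem decompose_mem_upperNilradical_of_mem_jacobsonRad (hNI : IsNIRing R) {a : R} {m : ℕ}
    (hm : 0 < m) (ha : ∀ i, m < i → (decompose 𝒜 a i : R) = 0) (haJ : a ∈ jacobsonRad R) :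
    (decompose 𝒜 a m : R) ∈ upperNilradical R := by
  obtain ⟨z, hz⟩ := exists_mul_one_sub_eq_one_of_mem_jacobsonRad haJ
  have hz₀ : (decompose 𝒜 z 0 : R) * (1 - decompose 𝒜 a 0) = 1 := by
    have h := congrArg (GradedRing.projZeroRingHom 𝒜) hz
    rwa [map_mul, map_sub, map_one, GradedRing.projZeroRingHom_apply,
      GradedRing.projZeroRingHom_apply] at h
  have hfactor : (decompose 𝒜 a m : R) =
      decompose 𝒜 a m * decompose 𝒜 z 0 * (1 - decompose 𝒜 a 0) := by
    rw [mul_assoc, hz₀, mul_one]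
  rw [hfactor]
  exact (upperNilradical R).mul_mem_right _ _
    (hNI.decompose_mul_decompose_mem_upperNilradical 𝒜 hm ha hz 0)

theorem mem_upperNilradical_of_mem_jacobsonRad (hNI : IsNIRing R)
    (hnil : ∀ x ∈ jacobsonRad R, x ∈ 𝒜 0 → IsNilpotent x) {a : R} (haJ : a ∈ jacobsonRad R) :
    a ∈ upperNilradical R := by
  obtain ⟨m, ha⟩ := exists_decompose_eq_zero_of_lt 𝒜 a
  induction m generalizing a with
  | zero =>
    exact hNI.mem_upperNilradical_iff.2 (hnil a haJ (mem_zero_of_decompose_eq_zero 𝒜 ha))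
  | succ m ih =>
    have htop := hNI.decompose_mem_upperNilradical_of_mem_jacobsonRad 𝒜 m.succ_pos ha haJ
    have hrest := ih (sub_mem haJ (hNI.mem_jacobsonRad_of_isNilpotent
      (hNI.mem_upperNilradical_iff.1 htop))) (decompose_sub_decompose_eq_zero 𝒜 ha)
    simpa using add_mem hrest htop

end IsNIRing

end

/-- If `R = ⊕ Rₙ` is an `ℕ`-graded ring which is NI and `J(R) ∩ R₀` is nil,
then `R` is NJ: `J(R) = N(R)`. -/
theorem graded_NI_isNJ (R : Type*) [Ring R] (𝒜 : ℕ → AddSubgroup R)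
    [GradedRing 𝒜] (hNI : IsNIRing R)
    (hnil : ∀ x ∈ jacobsonRad R, x ∈ 𝒜 0 → IsNilpotent x) :
    (jacobsonRad R : Set R) = nilSet R := by
  ext x
  refine ⟨fun hx => ?_, hNI.mem_jacobsonRad_of_isNilpotent⟩
  exact hNI.mem_upperNilradical_iff.1 (hNI.mem_upperNilradical_of_mem_jacobsonRad 𝒜 hnil hx)
end
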